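/- Let r : ℝ → ℝ be L-Lipschitz, let u solve u' = r(u) on [0, Δt] with u(0) = a, and let x satisfy the backward Euler equation x = a + Δt·r(x) with L·Δt < 1. Suppose moreover |r(s)| ≤ M for all s in a set containing the values u(t) and x. Then |u(Δt) - x| ≤ (L·M·Δt²)·(1 + e^{LΔt})/(1 - LΔt). -/
import Mathlib


open Set

/-- One-step local error of backward Euler: if u solves u' = r(u) on [0,Δt] with u(0) = a,
    x satisfies x = a + Δt·r(x), L·Δt < 1, and |r| ≤ M on the relevant values, then
    |u(Δt) - x| ≤ L·M·Δt²·(1 + e^{LΔt})/(1 - LΔt). -/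
theorem backward_euler_local_error (r : ℝ → ℝ) (L M Δt : ℝ) (hL : 0 ≤ L) (hM : 0 ≤ M)
    (hΔt : 0 < Δt) (hr : ∀ x y : ℝ, |r x - r y| ≤ L * |x - y|) (hLΔt : L * Δt < 1)
    (a x : ℝ) (u : ℝ → ℝ) (hu0 : u 0 = a)
    (hu : ∀ t ∈ Icc (0:ℝ) Δt, HasDerivAt u (r (u t)) t)
    (hx : x = a + Δt * r x)
    (hbound_u : ∀ t ∈ Icc (0:ℝ) Δt, |r (u t)| ≤ M) (hbound_x : |r x| ≤ M) :
    |u Δt - x| ≤ (L * M * Δt ^ 2) * (1 + Real.exp (L * Δt)) / (1 - L * Δt) := by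
  have hconv : Convex ℝ (Icc (0:ℝ) Δt) := convex_Icc _ _
  have h0mem : (0:ℝ) ∈ Icc (0:ℝ) Δt := ⟨le_rfl, hΔt.le⟩
  have hΔtmem : Δt ∈ Icc (0:ℝ) Δt := ⟨hΔt.le, le_rfl⟩
  -- Step 1: |u t - a| ≤ M * Δt for t ∈ [0, Δt]
  have hstep1 : ∀ t ∈ Icc (0:ℝ) Δt, |u t - a| ≤ M * Δt := by
    intro t ht
    have := hconv.norm_image_sub_le_of_norm_hasDerivWithin_le
      (f' := fun s => r (u s)) (fun s hs => (hu s hs).hasDerivWithinAt)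
      (fun s hs => hbound_u s hs) h0mem ht
    rw [hu0] at this
    calc |u t - a| ≤ M * ‖t - 0‖ := this
      _ = M * |t| := by norm_num
      _ ≤ M * Δt := by
          apply mul_le_mul_of_nonneg_left _ hM
          rw [abs_of_nonneg ht.1]; exact ht.2
  -- Step 2: |x - a| ≤ M * Δt
  have hstep2 : |x - a| ≤ M * Δt := by
    have : x - a = Δt * r x := by linarith
    rw [this, abs_mul, abs_of_pos hΔt]
    calc Δt * |r x| ≤ Δt * M := by nlinarith
      _ = M * Δt := by ring
  -- Step 3: |u t - x| ≤ 2 * M * Δt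
  have hstep3 : ∀ t ∈ Icc (0:ℝ) Δt, |u t - x| ≤ 2 * M * Δt := by
    intro t ht
    calc |u t - x| = |(u t - a) + (a - x)| := by ring_nf
      _ ≤ |u t - a| + |a - x| := abs_add_le _ _
      _ ≤ M * Δt + M * Δt := by
          rw [abs_sub_comm a x]; exact add_le_add (hstep1 t ht) hstep2
      _ = 2 * M * Δt := by ring
  -- Step 4: consider g t = u t - t * r x
  have hg : ∀ t ∈ Icc (0:ℝ) Δt,
      HasDerivWithinAt (fun s => u s - s * r x) (r (u t) - r x) (Icc (0:ℝ) Δt) t := by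
    intro t ht
    have h1 := (hu t ht).hasDerivWithinAt (s := Icc (0:ℝ) Δt)
    have h2 : HasDerivWithinAt (fun s : ℝ => s * r x) (r x) (Icc (0:ℝ) Δt) t := by
      simpa using ((hasDerivAt_id t).mul_const (r x)).hasDerivWithinAt (s := Icc (0:ℝ) Δt)
    exact h1.sub h2
  have hgbound : ∀ t ∈ Icc (0:ℝ) Δt, ‖r (u t) - r x‖ ≤ L * (2 * M * Δt) := by
    intro t ht
    calc ‖r (u t) - r x‖ = |r (u t) - r x| := rfl
      _ ≤ L * |u t - x| := hr _ _
      _ ≤ L * (2 * M * Δt) := mul_le_mul_of_nonneg_left (hstep3 t ht) hL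
  have hmain := hconv.norm_image_sub_le_of_norm_hasDerivWithin_le hg hgbound h0mem hΔtmem
  have key : |u Δt - x| ≤ 2 * L * M * Δt ^ 2 := by
    have heq : (u Δt - Δt * r x) - (u 0 - 0 * r x) = u Δt - x := by
      rw [hu0]; linarith
    have : ‖u Δt - x‖ ≤ L * (2 * M * Δt) * ‖Δt - 0‖ := by
      rw [← heq]; exact hmain
    rw [show ‖Δt - 0‖ = Δt by rw [sub_zero]; exact abs_of_pos hΔt] at this
    calc |u Δt - x| ≤ L * (2 * M * Δt) * Δt := this
      _ = 2 * L * M * Δt ^ 2 := by ring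
  -- Step 5: compare with the target
  have hden : 0 < 1 - L * Δt := by linarith
  have hexp : (1:ℝ) ≤ Real.exp (L * Δt) := Real.one_le_exp (by positivity)
  rw [div_eq_mul_inv]
  have h2 : 2 * (1 - L * Δt) ≤ 1 + Real.exp (L * Δt) := by nlinarith
  have hLM : 0 ≤ L * M * Δt ^ 2 := by positivity
  calc |u Δt - x| ≤ 2 * L * M * Δt ^ 2 := key
    _ = (L * M * Δt ^ 2) * (2 * (1 - L * Δt)) * (1 - L * Δt)⁻¹ := by
        field_simp
    _ ≤ (L * M * Δt ^ 2) * (1 + Real.exp (L * Δt)) * (1 - L * Δt)⁻¹ := by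
        apply mul_le_mul_of_nonneg_right _ (by positivity)
        exact mul_le_mul_of_nonneg_left h2 hLM
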